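/- arXiv:0802.3942 — 4 statements merged into one kernel-verified Lean document; each statement's English description precedes it below -/
import Mathlib

section
/- (Hardy-type inequality adapted to the Schwarzschild metric.) There is an absolute constant C > 0 with the following property. Let M > 0 and let φ : (2M,∞) → ℝ be continuously differentiable with φ(r) → 0 as r → ∞. Then ∫_{2M}^{∞} (1 − 2M/r)^{-1/2} φ(r)² dr ≤ C ∫_{2M}^{∞} (1 − 2M/r)^{1/2} φ'(r)² r² dr, where both sides are allowed to equal +∞. -/
/-!
Write `φ r = -∫_r^∞ φ'` and apply Cauchy–Schwarz with the weight `t ^ (3/2)`: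
`φ(r)² ≤ (∫_r^∞ t^{-3/2} dt) (∫_r^∞ φ'(t)² t^{3/2} dt) = (2/√r) ∫_r^∞ φ'(t)² t^{3/2} dt`.
Integrating against `(1 - 2M/r)^{-1/2}` and exchanging the order of integration leaves,
for each `s`, the factor
`s^{3/2} ∫_{2M}^s (1 - 2M/r)^{-1/2} 2 r^{-1/2} dr = s^{3/2} ∫_{2M}^s 2 (r - 2M)^{-1/2} dr
= 4 s^{3/2} √(s - 2M) = 4 (1 - 2M/s)^{1/2} s²`, so the inequality holds with `C = 4`.
-/

open MeasureTheory Set Filter Topology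
open scoped ENNReal

theorem ofReal_mul_sq_eq_ofReal_mul_enorm_sq {c : ℝ} (hc : 0 ≤ c) (x : ℝ) :
    ENNReal.ofReal (c * x ^ 2) = ENNReal.ofReal c * ‖x‖ₑ ^ 2 := by
  rw [ENNReal.ofReal_mul hc, Real.enorm_eq_ofReal_abs, ← ENNReal.ofReal_pow (abs_nonneg x), sq_abs]

theorem sq_lintegral_le_lintegral_sq_mul_mul_lintegral_inv {α : Type*} [MeasurableSpace α]
    {μ : Measure α} {g w : α → ℝ≥0∞} (hg : AEMeasurable g μ) (hw : AEMeasurable w μ)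
    (hw0 : ∀ᵐ x ∂μ, w x ≠ 0) (hwtop : ∀ᵐ x ∂μ, w x ≠ ∞) :
    (∫⁻ x, g x ∂μ) ^ 2 ≤ (∫⁻ x, g x ^ 2 * w x ∂μ) * ∫⁻ x, (w x)⁻¹ ∂μ := by
  have hsplit : ∫⁻ x, g x ∂μ = ∫⁻ x, (g x ^ 2 * w x) ^ (2⁻¹ : ℝ) * (w x)⁻¹ ^ (2⁻¹ : ℝ) ∂μ := by
    refine lintegral_congr_ae ?_
    filter_upwards [hw0, hwtop] with x h0 htop
    rw [← ENNReal.mul_rpow_of_nonneg _ _ (by norm_num), mul_assoc, ENNReal.mul_inv_cancel h0 htop,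
      mul_one]
    exact_mod_cast (ENNReal.pow_rpow_inv_natCast two_ne_zero (g x)).symm
  have hCS := ENNReal.lintegral_mul_norm_pow_le ((hg.pow_const 2).mul hw) hw.inv
    (p := 2⁻¹) (q := 2⁻¹) (by norm_num) (by norm_num) (by norm_num)
  calc (∫⁻ x, g x ∂μ) ^ 2
      ≤ ((∫⁻ x, g x ^ 2 * w x ∂μ) ^ (2⁻¹ : ℝ) * (∫⁻ x, (w x)⁻¹ ∂μ) ^ (2⁻¹ : ℝ)) ^ 2 := by
        rw [hsplit]; gcongr; exact hCS
    _ = (∫⁻ x, g x ^ 2 * w x ∂μ) * ∫⁻ x, (w x)⁻¹ ∂μ := by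
        rw [mul_pow]
        exact_mod_cast congrArg₂ (· * ·) (ENNReal.rpow_inv_natCast_pow two_ne_zero _)
          (ENNReal.rpow_inv_natCast_pow two_ne_zero _)

theorem enorm_le_lintegral_Ioi_enorm_deriv {E : Type*} [NormedAddCommGroup E]
    [NormedSpace ℝ E] [CompleteSpace E] {φ : ℝ → E} {r : ℝ}
    (hcont : ContinuousWithinAt φ (Ici r) r) (hφ : DifferentiableOn ℝ φ (Ioi r))
    (hlim : Tendsto φ atTop (𝓝 0)) :
    ‖φ r‖ₑ ≤ ∫⁻ s in Ioi r, ‖deriv φ s‖ₑ := by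
  by_cases hfin : ∫⁻ s in Ioi r, ‖deriv φ s‖ₑ = ∞
  · simp [hfin]
  have hint : IntegrableOn (deriv φ) (Ioi r) :=
    ⟨(stronglyMeasurable_deriv φ).aestronglyMeasurable, lt_top_iff_ne_top.2 hfin⟩
  have hFTC := integral_Ioi_of_hasDerivAt_of_tendsto hcont
    (fun x hx => (hφ.differentiableAt (Ioi_mem_nhds hx)).hasDerivAt) hint hlim
  calc ‖φ r‖ₑ = ‖∫ s in Ioi r, deriv φ s‖ₑ := by rw [hFTC, zero_sub, enorm_neg]
    _ ≤ ∫⁻ s in Ioi r, ‖deriv φ s‖ₑ := enorm_integral_le_lintegral_enorm _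

theorem lintegral_Ioi_mul_lintegral_Ioi_eq {μ : Measure ℝ} [SFinite μ] {f g : ℝ → ℝ≥0∞}
    (hf : Measurable f) (hg : Measurable g) (a : ℝ) :
    ∫⁻ r in Ioi a, f r * ∫⁻ s in Ioi r, g s ∂μ ∂μ =
      ∫⁻ s in Ioi a, g s * ∫⁻ r in Ioo a s, f r ∂μ ∂μ := by
  have hmeas : Measurable (Function.uncurry fun r s => f r * (Ioi r).indicator g s) :=
    (hf.comp measurable_fst).mul
      ((hg.comp measurable_snd).indicator (measurableSet_lt measurable_fst measurable_snd))
  calc ∫⁻ r in Ioi a, f r * ∫⁻ s in Ioi r, g s ∂μ ∂μ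
      = ∫⁻ r in Ioi a, ∫⁻ s in Ioi a, f r * (Ioi r).indicator g s ∂μ ∂μ := by
        refine setLIntegral_congr_fun measurableSet_Ioi fun r hr => ?_
        rw [lintegral_const_mul _ (hg.indicator measurableSet_Ioi),
          lintegral_indicator measurableSet_Ioi, Measure.restrict_restrict measurableSet_Ioi,
          Ioi_inter_Ioi, sup_eq_left.2 (le_of_lt hr)]
    _ = ∫⁻ s in Ioi a, ∫⁻ r in Ioi a, f r * (Ioi r).indicator g s ∂μ ∂μ :=
        lintegral_lintegral_swap hmeas.aemeasurable
    _ = ∫⁻ s in Ioi a, g s * ∫⁻ r in Ioo a s, f r ∂μ ∂μ := by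
        refine setLIntegral_congr_fun measurableSet_Ioi fun s _ => ?_
        have hswap : ∀ r, f r * (Ioi r).indicator g s = g s * (Iio s).indicator f r := by
          intro r
          by_cases h : r < s <;> simp [indicator, h, mul_comm]
        simp_rw [hswap]
        rw [lintegral_const_mul _ (hf.indicator measurableSet_Iio),
          lintegral_indicator measurableSet_Iio, Measure.restrict_restrict measurableSet_Iio,
          Iio_inter_Ioi]

theorem lintegral_mul_enorm_sq_le_of_weight {E : Type*} [NormedAddCommGroup E]
    [NormedSpace ℝ E] [CompleteSpace E] {a : ℝ} {φ : ℝ → E} {u v w : ℝ → ℝ≥0∞}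
    (hφ : DifferentiableOn ℝ φ (Ioi a)) (hlim : Tendsto φ atTop (𝓝 0))
    (hu : Measurable u) (hw : Measurable w) (hw0 : ∀ x ∈ Ioi a, w x ≠ 0)
    (hwtop : ∀ x ∈ Ioi a, w x ≠ ∞)
    (hweight : ∀ s ∈ Ioi a, w s * ∫⁻ r in Ioo a s, u r * ∫⁻ t in Ioi r, (w t)⁻¹ ≤ v s) :
    ∫⁻ r in Ioi a, u r * ‖φ r‖ₑ ^ 2 ≤ ∫⁻ s in Ioi a, v s * ‖deriv φ s‖ₑ ^ 2 := by
  set K : ℝ → ℝ≥0∞ := fun r => ∫⁻ t in Ioi r, (w t)⁻¹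
  set g : ℝ → ℝ≥0∞ := fun s => ‖deriv φ s‖ₑ ^ 2 * w s
  have hK : Measurable K := Antitone.measurable fun _ _ h => lintegral_mono_set (Ioi_subset_Ioi h)
  have hg : Measurable g := ((stronglyMeasurable_deriv φ).enorm.pow_const 2).mul hw
  have hpoint : ∀ r ∈ Ioi a, ‖φ r‖ₑ ^ 2 ≤ K r * ∫⁻ s in Ioi r, g s := by
    intro r hr
    have hcont : ContinuousWithinAt φ (Ici r) r :=
      (hφ.continuousOn.continuousAt (Ioi_mem_nhds hr)).continuousWithinAt
    have hbound := enorm_le_lintegral_Ioi_enorm_deriv hcont (hφ.mono (Ioi_subset_Ioi hr.le)) hlim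
    have hw_ae : ∀ᵐ t ∂volume.restrict (Ioi r), t ∈ Ioi a :=
      ae_restrict_of_forall_mem measurableSet_Ioi fun t ht => mem_Ioi.2 (hr.out.trans ht)
    calc ‖φ r‖ₑ ^ 2 ≤ (∫⁻ s in Ioi r, ‖deriv φ s‖ₑ) ^ 2 := by gcongr
      _ ≤ (∫⁻ s in Ioi r, g s) * K r :=
        sq_lintegral_le_lintegral_sq_mul_mul_lintegral_inv
          (stronglyMeasurable_deriv φ).enorm.aemeasurable hw.aemeasurable
          (hw_ae.mono fun t ht => hw0 t ht) (hw_ae.mono fun t ht => hwtop t ht)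
      _ = K r * ∫⁻ s in Ioi r, g s := mul_comm _ _
  calc ∫⁻ r in Ioi a, u r * ‖φ r‖ₑ ^ 2
      ≤ ∫⁻ r in Ioi a, (u r * K r) * ∫⁻ s in Ioi r, g s := by
        refine setLIntegral_mono' measurableSet_Ioi fun r hr => ?_
        rw [mul_assoc]
        gcongr
        exact hpoint r hr
    _ = ∫⁻ s in Ioi a, g s * ∫⁻ r in Ioo a s, u r * K r :=
        lintegral_Ioi_mul_lintegral_Ioi_eq (hu.mul hK) hg a
    _ ≤ ∫⁻ s in Ioi a, v s * ‖deriv φ s‖ₑ ^ 2 := by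
        refine setLIntegral_mono' measurableSet_Ioi fun s hs => ?_
        calc g s * ∫⁻ r in Ioo a s, u r * K r
            = ‖deriv φ s‖ₑ ^ 2 * (w s * ∫⁻ r in Ioo a s, u r * K r) := mul_assoc _ _ _
          _ ≤ ‖deriv φ s‖ₑ ^ 2 * v s := by gcongr; exact hweight s hs
          _ = v s * ‖deriv φ s‖ₑ ^ 2 := mul_comm _ _

theorem lintegral_Ioo_ofReal_deriv_eq_sub {g g' : ℝ → ℝ} {a b : ℝ} (hab : a ≤ b)
    (hcont : ContinuousOn g (Icc a b)) (hderiv : ∀ x ∈ Ioo a b, HasDerivAt g (g' x) x)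
    (hg' : ∀ x ∈ Ioo a b, 0 ≤ g' x) :
    ∫⁻ x in Ioo a b, ENNReal.ofReal (g' x) = ENNReal.ofReal (g b - g a) := by
  have hint : IntegrableOn g' (Ioc a b) :=
    intervalIntegral.integrableOn_deriv_of_nonneg hcont hderiv hg'
  rw [← ofReal_integral_eq_lintegral_ofReal (hint.mono_set Ioo_subset_Ioc_self)
      (ae_restrict_of_forall_mem measurableSet_Ioo hg'), ← integral_Ioc_eq_integral_Ioo,
    ← intervalIntegral.integral_of_le hab, intervalIntegral.integral_eq_sub_of_hasDerivAt_of_le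
      hab hcont hderiv ((intervalIntegrable_iff_integrableOn_Ioc_of_le hab).2 hint)]

theorem lintegral_Ioi_ofReal_rpow_of_lt {p c : ℝ} (hp : p < -1) (hc : 0 < c) :
    ∫⁻ t in Ioi c, ENNReal.ofReal (t ^ p) = ENNReal.ofReal (-c ^ (p + 1) / (p + 1)) := by
  rw [← ofReal_integral_eq_lintegral_ofReal (integrableOn_Ioi_rpow_of_lt hp hc)
      (ae_restrict_of_forall_mem measurableSet_Ioi fun t ht => Real.rpow_nonneg (hc.trans ht).le _),
    integral_Ioi_rpow_of_lt hp hc]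

theorem sqrt_one_sub_div_mul_sqrt {a r : ℝ} (hr : 0 < r) :
    √(1 - a / r) * √r = √(r - a) := by
  rw [← Real.sqrt_mul' _ hr.le, sub_mul, div_mul_cancel₀ _ hr.ne', one_mul]

theorem lintegral_Ioi_inv_ofReal_rpow_three_halves {r : ℝ} (hr : 0 < r) :
    ∫⁻ t in Ioi r, (ENNReal.ofReal (t ^ (3 / 2 : ℝ)))⁻¹ = ENNReal.ofReal (2 / √r) := by
  have hinv : EqOn (fun t => (ENNReal.ofReal (t ^ (3 / 2 : ℝ)))⁻¹)
      (fun t => ENNReal.ofReal (t ^ (-(3 / 2) : ℝ))) (Ioi r) := fun t ht => by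
    dsimp only
    have ht0 : 0 < t := hr.trans ht
    rw [← ENNReal.ofReal_inv_of_pos (Real.rpow_pos_of_pos ht0 _), Real.rpow_neg ht0.le]
  rw [setLIntegral_congr_fun measurableSet_Ioi hinv,
    lintegral_Ioi_ofReal_rpow_of_lt (by norm_num) hr, Real.sqrt_eq_rpow, div_eq_mul_inv 2,
    ← Real.rpow_neg hr.le]
  congr 1
  rw [show -(3 / 2 : ℝ) + 1 = -(1 / 2) by norm_num]
  ring

theorem lintegral_Ioo_two_div_sqrt_sub {a s : ℝ} (has : a ≤ s) :
    ∫⁻ r in Ioo a s, ENNReal.ofReal (2 / √(r - a)) = ENNReal.ofReal (4 * √(s - a)) := by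
  have hderiv : ∀ x ∈ Ioo a s, HasDerivAt (fun x => 4 * √(x - a)) (2 / √(x - a)) x := by
    intro x hx
    refine (((hasDerivAt_id' x).sub_const a).sqrt (sub_pos.2 hx.1).ne'
      |>.const_mul 4).congr_deriv ?_
    field_simp
    norm_num
  rw [lintegral_Ioo_ofReal_deriv_eq_sub has (by fun_prop) hderiv (fun x _ => by positivity),
    sub_self, Real.sqrt_zero, mul_zero, sub_zero]

theorem schwarzschild_hardy_weight_eq {a s : ℝ} (ha : 0 ≤ a) (has : a < s) :
    ENNReal.ofReal (s ^ (3 / 2 : ℝ)) * ∫⁻ r in Ioo a s,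
        ENNReal.ofReal (√(1 - a / r))⁻¹ * ∫⁻ t in Ioi r, (ENNReal.ofReal (t ^ (3 / 2 : ℝ)))⁻¹ =
      4 * ENNReal.ofReal (√(1 - a / s) * s ^ 2) := by
  have hs : 0 < s := ha.trans_lt has
  have hinner : EqOn (fun r => ENNReal.ofReal (√(1 - a / r))⁻¹ *
        ∫⁻ t in Ioi r, (ENNReal.ofReal (t ^ (3 / 2 : ℝ)))⁻¹)
      (fun r => ENNReal.ofReal (2 / √(r - a))) (Ioo a s) := fun r hr => by
    dsimp only
    have hr : 0 < r := ha.trans_lt hr.1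
    rw [lintegral_Ioi_inv_ofReal_rpow_three_halves hr, ← ENNReal.ofReal_mul (by positivity),
      ← sqrt_one_sub_div_mul_sqrt (a := a) hr]
    field_simp
  rw [setLIntegral_congr_fun measurableSet_Ioo hinner, lintegral_Ioo_two_div_sqrt_sub has.le,
    ← ENNReal.ofReal_mul (by positivity), ← ENNReal.ofReal_ofNat 4,
    ← ENNReal.ofReal_mul (by norm_num), ← sqrt_one_sub_div_mul_sqrt (a := a) hs]
  congr 1
  have h32 : s ^ (3 / 2 : ℝ) * √s = s ^ 2 := by
    rw [Real.sqrt_eq_rpow, ← Real.rpow_add hs]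
    norm_num
  linear_combination (4 * √(1 - a / s)) * h32

/-- **Hardy-type inequality adapted to the Schwarzschild metric.** There is an absolute
constant `C > 0` such that for every mass `M > 0` and every continuously differentiable
`φ : (2M,∞) → ℝ` with `φ(r) → 0` as `r → ∞`,
`∫_{2M}^∞ (1 - 2M/r)^{-1/2} φ(r)² dr ≤ C ∫_{2M}^∞ (1 - 2M/r)^{1/2} φ'(r)² r² dr`,
where both sides are allowed to be `+∞` (they are taken in `ℝ≥0∞`). -/
theorem hardy_inequality_schwarzschild :
    ∃ C : ℝ, 0 < C ∧
      ∀ M : ℝ, 0 < M →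
        ∀ φ : ℝ → ℝ,
          ContDiffOn ℝ 1 φ (Set.Ioi (2 * M)) →
          Filter.Tendsto φ Filter.atTop (nhds 0) →
          (∫⁻ r in Set.Ioi (2 * M),
              ENNReal.ofReal ((φ r) ^ 2 / Real.sqrt (1 - 2 * M / r)))
            ≤ ENNReal.ofReal C *
              ∫⁻ r in Set.Ioi (2 * M),
                ENNReal.ofReal (Real.sqrt (1 - 2 * M / r) * (deriv φ r) ^ 2 * r ^ 2) := by
  refine ⟨4, by norm_num, fun M hM φ hφ hlim => ?_⟩
  have hweight := lintegral_mul_enorm_sq_le_of_weight (a := 2 * M)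
    (u := fun r => ENNReal.ofReal (√(1 - 2 * M / r))⁻¹)
    (v := fun s => 4 * ENNReal.ofReal (√(1 - 2 * M / s) * s ^ 2))
    (w := fun t => ENNReal.ofReal (t ^ (3 / 2 : ℝ)))
    (hφ.differentiableOn one_ne_zero) hlim (by fun_prop) (by fun_prop)
    (fun t ht => (ENNReal.ofReal_pos.2 (Real.rpow_pos_of_pos (by linarith [ht.out]) _)).ne')
    (fun _ _ => ENNReal.ofReal_ne_top)
    (fun s hs => (schwarzschild_hardy_weight_eq (by positivity) hs).le)
  calc ∫⁻ r in Ioi (2 * M), ENNReal.ofReal (φ r ^ 2 / √(1 - 2 * M / r))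
      = ∫⁻ r in Ioi (2 * M), ENNReal.ofReal (√(1 - 2 * M / r))⁻¹ * ‖φ r‖ₑ ^ 2 := by
        refine lintegral_congr fun r => ?_
        rw [div_eq_inv_mul, ofReal_mul_sq_eq_ofReal_mul_enorm_sq (by positivity)]
    _ ≤ ∫⁻ s in Ioi (2 * M), 4 * ENNReal.ofReal (√(1 - 2 * M / s) * s ^ 2) * ‖deriv φ s‖ₑ ^ 2 :=
        hweight
    _ = ENNReal.ofReal 4 * ∫⁻ s in Ioi (2 * M),
          ENNReal.ofReal (√(1 - 2 * M / s) * deriv φ s ^ 2 * s ^ 2) := by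
        rw [ENNReal.ofReal_ofNat, ← lintegral_const_mul' _ _ ENNReal.ofNat_ne_top]
        refine lintegral_congr fun s => ?_
        rw [mul_right_comm _ (deriv φ s ^ 2),
          ofReal_mul_sq_eq_ofReal_mul_enorm_sq (x := deriv φ s) (by positivity), mul_assoc]
end

section
/- (Elliptic estimate for the stationary Regge–Wheeler equation, regime λ ≫ τ.) For every c₂ ≥ 1 there is a constant C = C(c₂) > 0 with the following property. Let a < b, λ > 0, let V : [a,b] → ℝ be continuous with −c₂λ² ≤ V(x) ≤ −λ² for all x ∈ [a,b], and let u : ℝ → ℝ be twice continuously differentiable and compactly supported in (a,b). Set g(x) = u''(x) + V(x)u(x). Then λ^{3/2} sup_{x∈[a,b]} |u(x)| + λ^{1/2} sup_{x∈[a,b]} |u'(x)| ≤ C ‖g‖_{L²(a,b)}. -/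
open MeasureTheory Set

/-! Multiplying `g = u'' + V u` by `u` and integrating by parts gives the energy inequality
`λ² ‖u‖² + ‖u'‖² ≤ -∫ g u ≤ ‖g‖ ‖u‖` (all norms in `L²(ℝ)`, which agree with those on `(a, b)`
since `u` is supported there), hence `λ² ‖u‖ ≤ ‖g‖` and `λ ‖u'‖ ≤ ‖g‖`. Pointwise values are
controlled by `f(x)² = ∫_{-∞}^x (f²)' ≤ 2 ‖f‖ ‖f'‖`: for `f = u` this gives `λ³ u² ≤ 2 ‖g‖²`, and
for `f = u'`, together with `‖u''‖ ≤ ‖g‖ + ‖V u‖ ≤ ‖g‖ + c₂ λ² ‖u‖`, it gives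
`λ u'² ≤ 2 (1 + c₂) ‖g‖²`. -/

section L2

variable {α : Type*} [MeasurableSpace α] {μ : Measure α} {f g : α → ℝ}

theorem integral_abs_mul_le_sqrt_mul_sqrt (hf : MemLp f 2 μ) (hg : MemLp g 2 μ) :
    ∫ x, |f x * g x| ∂μ ≤ √(∫ x, f x ^ 2 ∂μ) * √(∫ x, g x ^ 2 ∂μ) := by
  have h := integral_mul_norm_le_Lp_mul_Lq .two_two (f := f) (g := g) (μ := μ)
    (by simpa using hf) (by simpa using hg)
  simp only [Real.norm_eq_abs, ← abs_mul, Real.rpow_two, sq_abs] at h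
  simpa only [Real.sqrt_eq_rpow, one_div] using h

theorem sqrt_integral_add_sq_le (hf : MemLp f 2 μ) (hg : MemLp g 2 μ) :
    √(∫ x, (f x + g x) ^ 2 ∂μ) ≤ √(∫ x, f x ^ 2 ∂μ) + √(∫ x, g x ^ 2 ∂μ) := by
  set S := √(∫ x, (f x + g x) ^ 2 ∂μ)
  have hfg : MemLp (fun x => f x + g x) 2 μ := hf.add hg
  have key : S ^ 2 ≤ S * (√(∫ x, f x ^ 2 ∂μ) + √(∫ x, g x ^ 2 ∂μ)) := calc
    S ^ 2 = ∫ x, (f x + g x) * f x + (f x + g x) * g x ∂μ := by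
      rw [Real.sq_sqrt (integral_nonneg fun x => sq_nonneg _)]
      congr 1 with x; ring
    _ ≤ ∫ x, |(f x + g x) * f x| + |(f x + g x) * g x| ∂μ :=
      integral_mono (hfg.integrable_mul hf |>.add (hfg.integrable_mul hg))
        ((hfg.integrable_mul hf).abs.add (hfg.integrable_mul hg).abs)
        fun x => add_le_add (le_abs_self _) (le_abs_self _)
    _ = ∫ x, |(f x + g x) * f x| ∂μ + ∫ x, |(f x + g x) * g x| ∂μ :=
      integral_add (hfg.integrable_mul hf).abs (hfg.integrable_mul hg).abs
    _ ≤ S * √(∫ x, f x ^ 2 ∂μ) + S * √(∫ x, g x ^ 2 ∂μ) :=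
      add_le_add (integral_abs_mul_le_sqrt_mul_sqrt hfg hf)
        (integral_abs_mul_le_sqrt_mul_sqrt hfg hg)
    _ = _ := by ring
  nlinarith [Real.sqrt_nonneg (∫ x, f x ^ 2 ∂μ), Real.sqrt_nonneg (∫ x, g x ^ 2 ∂μ)]

theorem sqrt_integral_sq_le_mul_of_abs_le {K : ℝ} (hK : 0 ≤ K) (hg : MemLp g 2 μ)
    (hfg : ∀ x, |f x| ≤ K * |g x|) : √(∫ x, f x ^ 2 ∂μ) ≤ K * √(∫ x, g x ^ 2 ∂μ) := by
  have hmono : ∫ x, f x ^ 2 ∂μ ≤ ∫ x, K ^ 2 * g x ^ 2 ∂μ :=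
    integral_mono_of_nonneg (.of_forall fun x => sq_nonneg _) (hg.integrable_sq.const_mul _)
      (.of_forall fun x => by
        dsimp only
        rw [← sq_abs (f x), ← sq_abs (g x), ← mul_pow]
        exact pow_le_pow_left₀ (abs_nonneg _) (hfg x) 2)
  calc √(∫ x, f x ^ 2 ∂μ) ≤ √(∫ x, K ^ 2 * g x ^ 2 ∂μ) := Real.sqrt_le_sqrt hmono
    _ = K * √(∫ x, g x ^ 2 ∂μ) := by
      rw [integral_const_mul, Real.sqrt_mul' _ (integral_nonneg fun x => sq_nonneg _),
        Real.sqrt_sq hK, mul_comm]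

end L2

theorem HasCompactSupport.le_integral_abs_deriv {h : ℝ → ℝ} (hh : ContDiff ℝ 1 h)
    (hK : HasCompactSupport h) (x : ℝ) : h x ≤ ∫ t, |deriv h t| := by
  have hint : Integrable (deriv h) :=
    (hh.continuous_deriv le_rfl).integrable_of_hasCompactSupport hK.deriv
  calc h x = ∫ t in Iic x, deriv h t := (hK.integral_Iic_deriv_eq hh x).symm
    _ ≤ ∫ t in Iic x, |deriv h t| :=
      integral_mono hint.integrableOn hint.abs.integrableOn fun t => le_abs_self _
    _ ≤ ∫ t, |deriv h t| := setIntegral_le_integral hint.abs (.of_forall fun t => abs_nonneg _)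

theorem HasCompactSupport.sq_le_two_mul_sqrt_integral_sq_mul_sqrt_integral_deriv_sq {f : ℝ → ℝ}
    (hf : ContDiff ℝ 1 f) (hK : HasCompactSupport f) (x : ℝ) :
    f x ^ 2 ≤ 2 * (√(∫ t, f t ^ 2) * √(∫ t, deriv f t ^ 2)) := by
  have hderiv : deriv (fun t => f t ^ 2) = fun t => 2 * (f t * deriv f t) := by
    ext t; rw [deriv_fun_pow (hf.differentiable one_ne_zero t)]; ring
  calc f x ^ 2 ≤ ∫ t, |deriv (fun t => f t ^ 2) t| :=
        (hK.comp_left (g := fun y : ℝ => y ^ 2) (zero_pow two_ne_zero)).le_integral_abs_deriv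
          (hf.pow 2) x
    _ = 2 * ∫ t, |f t * deriv f t| := by
        simp only [hderiv, abs_mul, abs_two, integral_const_mul]
    _ ≤ _ := by
        gcongr
        exact integral_abs_mul_le_sqrt_mul_sqrt
          (hf.continuous.memLp_of_hasCompactSupport hK)
          ((hf.continuous_deriv le_rfl).memLp_of_hasCompactSupport hK.deriv)

theorem energy_estimate {u V : ℝ → ℝ} {lam : ℝ} (hu : ContDiff ℝ 2 u) (hK : HasCompactSupport u)
    (hVu : Continuous fun x => V x * u x) (hV : ∀ x ∈ tsupport u, V x ≤ -lam ^ 2) :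
    lam ^ 2 * (∫ x, u x ^ 2) + ∫ x, deriv u x ^ 2 ≤
      -∫ x, (deriv (deriv u) x + V x * u x) * u x := by
  have hu' : ContDiff ℝ 1 (deriv u) := hu.deriv' (n := 1)
  have hc : Continuous u := hu.continuous
  have hc' : Continuous (deriv u) := hu'.continuous
  have hc'' : Continuous (deriv (deriv u)) := hu'.continuous_deriv le_rfl
  have hIBP : ∫ x, u x * deriv (deriv u) x = -∫ x, deriv u x ^ 2 := by
    simp only [sq]
    exact integral_mul_deriv_eq_deriv_mul_of_integrable
      (fun x _ => (hu.differentiable two_ne_zero x).hasDerivAt)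
      (fun x _ => (hu'.differentiable one_ne_zero x).hasDerivAt)
      ((hc.mul hc'').integrable_of_hasCompactSupport hK.mul_right)
      ((hc'.mul hc').integrable_of_hasCompactSupport hK.deriv.mul_right)
      ((hc.mul hc').integrable_of_hasCompactSupport hK.mul_right)
  have hsplit : ∫ x, (deriv (deriv u) x + V x * u x) * u x =
      (∫ x, u x * deriv (deriv u) x) + ∫ x, V x * u x * u x := by
    have h1 : Integrable fun x => u x * deriv (deriv u) x :=
      (hc.mul hc'').integrable_of_hasCompactSupport hK.mul_right
    have h2 : Integrable fun x => V x * u x * u x :=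
      (hVu.mul hc).integrable_of_hasCompactSupport hK.mul_left
    rw [← integral_add h1 h2]
    congr 1 with x; ring
  have hpot : lam ^ 2 * (∫ x, u x ^ 2) ≤ -∫ x, V x * u x * u x := by
    rw [← integral_const_mul, ← integral_neg]
    refine integral_mono ((hc.memLp_of_hasCompactSupport hK).integrable_sq.const_mul _)
      ((hVu.mul hc).integrable_of_hasCompactSupport hK.mul_left).neg fun x => ?_
    by_cases hx : x ∈ tsupport u
    · have := hV x hx
      nlinarith [sq_nonneg (u x)]
    · simp [image_eq_zero_of_notMem_tsupport hx]
  rw [hsplit, hIBP]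
  linarith

theorem rpow_div_two_mul_abs_le_sqrt_mul {lam y K M : ℝ} {n : ℕ} (hlam : 0 ≤ lam) (hM : 0 ≤ M)
    (h : lam ^ n * y ^ 2 ≤ K * M ^ 2) : lam ^ ((n : ℝ) / 2) * |y| ≤ √K * M := by
  have hsq : lam ^ ((n : ℝ) / 2) = √(lam ^ n) := by
    rw [Real.sqrt_eq_rpow, ← Real.rpow_natCast, ← Real.rpow_mul hlam, mul_one_div]
  calc lam ^ ((n : ℝ) / 2) * |y| = √(lam ^ n * y ^ 2) := by
        rw [hsq, Real.sqrt_mul (pow_nonneg hlam n), Real.sqrt_sq_eq_abs]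
    _ ≤ √(K * M ^ 2) := Real.sqrt_le_sqrt h
    _ = √K * M := by rw [Real.sqrt_mul' K (sq_nonneg M), Real.sqrt_sq hM]

theorem mul_sSup_image_le {α : Type*} {s : Set α} {f : α → ℝ} {c M : ℝ} (hc : 0 ≤ c) (hM : 0 ≤ M)
    (h : ∀ x ∈ s, c * f x ≤ M) : c * sSup (f '' s) ≤ M := by
  rw [← smul_eq_mul, ← Real.sSup_smul_of_nonneg hc]
  exact Real.sSup_le (by rintro _ ⟨_, ⟨x, hx, rfl⟩, rfl⟩; exact h x hx) hM

theorem sq_mul_le_and_mul_le_of_sq_mul_sq_add_sq_le {lam a b N : ℝ} (ha : 0 ≤ a) (hN : 0 ≤ N)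
    (h : lam ^ 2 * a ^ 2 + b ^ 2 ≤ N * a) : lam ^ 2 * a ≤ N ∧ lam * b ≤ N := by
  have ha' : lam ^ 2 * a ≤ N := by
    rcases ha.eq_or_lt with rfl | ha
    · simpa using hN
    · exact le_of_mul_le_mul_right (by nlinarith [sq_nonneg b]) ha
  refine ⟨ha', abs_le_of_sq_le_sq' ?_ hN |>.2⟩
  nlinarith [sq_nonneg (lam * a), mul_le_mul_of_nonneg_left ha' hN]

section ReggeWheeler

variable {u V : ℝ → ℝ} {lam c : ℝ} (hu : ContDiff ℝ 2 u) (hK : HasCompactSupport u)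
  (hVu : Continuous fun x => V x * u x)
include hu hK hVu

theorem memLp_deriv_deriv_add_mul : MemLp (fun x => deriv (deriv u) x + V x * u x) 2 :=
  (((hu.deriv' (n := 1)).continuous_deriv le_rfl).add hVu).memLp_of_hasCompactSupport
    (hK.deriv.deriv.add hK.mul_left)

theorem l2_estimate (hV : ∀ x ∈ tsupport u, V x ≤ -lam ^ 2) :
    lam ^ 2 * √(∫ x, u x ^ 2) ≤ √(∫ x, (deriv (deriv u) x + V x * u x) ^ 2) ∧
      lam * √(∫ x, deriv u x ^ 2) ≤ √(∫ x, (deriv (deriv u) x + V x * u x) ^ 2) := by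
  refine sq_mul_le_and_mul_le_of_sq_mul_sq_add_sq_le (Real.sqrt_nonneg _) (Real.sqrt_nonneg _) ?_
  rw [Real.sq_sqrt (integral_nonneg fun x => sq_nonneg _),
    Real.sq_sqrt (integral_nonneg fun x => sq_nonneg _)]
  calc lam ^ 2 * (∫ x, u x ^ 2) + ∫ x, deriv u x ^ 2
      ≤ -∫ x, (deriv (deriv u) x + V x * u x) * u x := energy_estimate hu hK hVu hV
    _ ≤ ∫ x, |(deriv (deriv u) x + V x * u x) * u x| :=
      (neg_le_abs _).trans abs_integral_le_integral_abs
    _ ≤ _ := integral_abs_mul_le_sqrt_mul_sqrt (memLp_deriv_deriv_add_mul hu hK hVu)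
      (hu.continuous.memLp_of_hasCompactSupport hK)

theorem pow_three_mul_sq_le (hlam : 0 ≤ lam) (hV : ∀ x ∈ tsupport u, V x ≤ -lam ^ 2) (x : ℝ) :
    lam ^ 3 * u x ^ 2 ≤ 2 * √(∫ x, (deriv (deriv u) x + V x * u x) ^ 2) ^ 2 := by
  set N := √(∫ x, (deriv (deriv u) x + V x * u x) ^ 2)
  obtain ⟨ha, hb⟩ := l2_estimate hu hK hVu hV
  have hx := hK.sq_le_two_mul_sqrt_integral_sq_mul_sqrt_integral_deriv_sq (hu.of_le one_le_two) x
  set a := √(∫ x, u x ^ 2)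
  set b := √(∫ x, deriv u x ^ 2)
  calc lam ^ 3 * u x ^ 2 ≤ lam ^ 3 * (2 * (a * b)) := by gcongr
    _ = 2 * ((lam ^ 2 * a) * (lam * b)) := by ring
    _ ≤ 2 * (N * N) := by gcongr
    _ = _ := by ring

theorem mul_deriv_sq_le (hlam : 0 ≤ lam) (hc : 0 ≤ c)
    (hV : ∀ x ∈ tsupport u, -c * lam ^ 2 ≤ V x ∧ V x ≤ -lam ^ 2) (x : ℝ) :
    lam * deriv u x ^ 2 ≤ 2 * (1 + c) * √(∫ x, (deriv (deriv u) x + V x * u x) ^ 2) ^ 2 := by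
  set N := √(∫ x, (deriv (deriv u) x + V x * u x) ^ 2)
  set a := √(∫ x, u x ^ 2)
  set b := √(∫ x, deriv u x ^ 2)
  obtain ⟨ha, hb⟩ := l2_estimate hu hK hVu fun x hx => (hV x hx).2
  have hVu_le : √(∫ x, (V x * u x) ^ 2) ≤ c * lam ^ 2 * a := by
    refine sqrt_integral_sq_le_mul_of_abs_le (by positivity)
      (hu.continuous.memLp_of_hasCompactSupport hK) fun x => ?_
    by_cases hx : x ∈ tsupport u
    · rw [abs_mul]
      gcongr
      exact abs_le.2 ⟨by linarith [(hV x hx).1], by nlinarith [(hV x hx).2, sq_nonneg lam]⟩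
    · simp [image_eq_zero_of_notMem_tsupport hx]
  have hu'' : √(∫ x, deriv (deriv u) x ^ 2) ≤ N + c * lam ^ 2 * a := by
    have := sqrt_integral_add_sq_le (g := fun x => -(V x * u x))
      (memLp_deriv_deriv_add_mul hu hK hVu) (hVu.neg.memLp_of_hasCompactSupport hK.mul_left.neg)
    simp only [add_neg_cancel_right, neg_sq] at this
    linarith
  have hx :=
    hK.deriv.sq_le_two_mul_sqrt_integral_sq_mul_sqrt_integral_deriv_sq (hu.deriv' (n := 1)) x
  calc lam * deriv u x ^ 2 ≤ lam * (2 * (b * √(∫ x, deriv (deriv u) x ^ 2))) := by gcongr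
    _ ≤ lam * (2 * (b * (N + c * lam ^ 2 * a))) := by gcongr
    _ = 2 * ((lam * b) * N + c * (lam ^ 2 * a) * (lam * b)) := by ring
    _ ≤ 2 * (N * N + c * N * N) := by gcongr
    _ = _ := by ring

end ReggeWheeler

/-- **Elliptic estimate for the stationary Regge–Wheeler equation, regime `λ ≫ τ`.**
For every `c₂ ≥ 1` there is `C = C(c₂) > 0` such that whenever `a < b`, `λ > 0`,
`V : [a,b] → ℝ` is continuous with `-c₂ λ² ≤ V ≤ -λ²` on `[a,b]`, and `u` is a `C²`
function compactly supported in `(a,b)`, then with `g = u'' + V u`,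
`λ^{3/2} sup_{[a,b]} |u| + λ^{1/2} sup_{[a,b]} |u'| ≤ C ‖g‖_{L²(a,b)}`. -/
theorem elliptic_estimate_regge_wheeler :
    ∀ c₂ : ℝ, 1 ≤ c₂ →
      ∃ C : ℝ, 0 < C ∧
        ∀ (a b lam : ℝ) (V u : ℝ → ℝ),
          a < b → 0 < lam →
          ContinuousOn V (Set.Icc a b) →
          (∀ x ∈ Set.Icc a b, -c₂ * lam ^ 2 ≤ V x ∧ V x ≤ -lam ^ 2) →
          ContDiff ℝ 2 u →
          tsupport u ⊆ Set.Ioo a b →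
          lam ^ ((3:ℝ)/2) * sSup ((fun x => |u x|) '' Set.Icc a b) +
              lam ^ ((1:ℝ)/2) * sSup ((fun x => |deriv u x|) '' Set.Icc a b)
            ≤ C * Real.sqrt (∫ x in Set.Ioo a b,
                (deriv (deriv u) x + V x * u x) ^ 2) := by
  intro c₂ hc₂
  refine ⟨√2 + √(2 * (1 + c₂)), by positivity, ?_⟩
  intro a b lam V u _ hlam hVcont hVbd hu hsupp
  have hK : HasCompactSupport u :=
    isCompact_Icc.of_isClosed_subset (isClosed_tsupport u) (hsupp.trans Ioo_subset_Icc_self)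
  have hVu : Continuous fun x => V x * u x :=
    ((hVcont.mono Ioo_subset_Icc_self).mul hu.continuous.continuousOn).continuous_of_tsupport_subset
      isOpen_Ioo (subset_trans tsupport_mul_subset_right hsupp)
  have hVsupp : ∀ x ∈ tsupport u, -c₂ * lam ^ 2 ≤ V x ∧ V x ≤ -lam ^ 2 :=
    fun x hx => hVbd x (Ioo_subset_Icc_self (hsupp hx))
  have hG : ∫ x in Ioo a b, (deriv (deriv u) x + V x * u x) ^ 2 =
      ∫ x, (deriv (deriv u) x + V x * u x) ^ 2 := by
    refine setIntegral_eq_integral_of_forall_compl_eq_zero fun x hx => ?_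
    have hx : x ∉ tsupport u := fun h => hx (hsupp h)
    have hx'' : x ∉ tsupport (deriv (deriv u)) :=
      fun h => hx (tsupport_deriv_subset.trans tsupport_deriv_subset h)
    simp [image_eq_zero_of_notMem_tsupport hx, image_eq_zero_of_notMem_tsupport hx'']
  rw [hG, add_mul]
  refine add_le_add (mul_sSup_image_le (by positivity) (by positivity) fun x _ => ?_)
    (mul_sSup_image_le (by positivity) (by positivity) fun x _ => ?_)
  · simpa only [Nat.cast_ofNat] using
      rpow_div_two_mul_abs_le_sqrt_mul (n := 3) hlam.le (Real.sqrt_nonneg _)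
        (pow_three_mul_sq_le hu hK hVu hlam.le (fun x hx => (hVsupp x hx).2) x)
  · simpa only [Nat.cast_one] using
      rpow_div_two_mul_abs_le_sqrt_mul (n := 1) hlam.le (Real.sqrt_nonneg _) (by
        simpa only [pow_one] using
          mul_deriv_sq_le hu hK hVu hlam.le (zero_le_one.trans hc₂) hVsupp x)
end

section
/- (Properties of the explicit Morawetz multiplier coefficient.) Let M > 0. Define a : (2M,∞) → ℝ by a(r) = r^{-2} ( (r−3M)(r+2M) + 6M² log((r−2M)/M) ), and define the fourth-order expression (La)(r) = − r^{-2} d/dr [ (1 − 2M/r) r² d/dr { (1 − 2M/r) (2r²)^{-1} d/dr ( r² a(r) ) } ]. Then a(3M) = 0, and there is a constant c > 0 (depending only on M) such that for all r > 2M: a'(r) ≥ c r^{-2} and (La)(r) ≥ c r^{-4}. -/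
open MeasureTheory Set

/-- The explicit Morawetz multiplier coefficient
`a(r) = r⁻² ((r-3M)(r+2M) + 6M² log((r-2M)/M))` on the Schwarzschild exterior. -/
noncomputable def morawetzA (M : ℝ) : ℝ → ℝ :=
  fun r => r ^ (-2:ℤ) * ((r - 3*M) * (r + 2*M) + 6 * M ^ 2 * Real.log ((r - 2*M) / M))

/-- The fourth-order expression
`(La)(r) = -r⁻² d/dr [ (1-2M/r) r² d/dr { (1-2M/r) (2r²)⁻¹ d/dr (r² a(r)) } ]`. -/
noncomputable def morawetzLa (M : ℝ) : ℝ → ℝ :=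
  fun r => -(r ^ (-2:ℤ)) *
    deriv (fun s => (1 - 2*M/s) * s ^ 2 *
      deriv (fun t => (1 - 2*M/t) * (2 * t ^ 2)⁻¹ *
        deriv (fun w => w ^ 2 * morawetzA M w) t) s) r

/-! The logarithm in `a` disappears after one derivative of `r² a(r)`, whose derivative is
`2r - M + 6M²/(r - 2M)`; hence `(1 - 2M/r)(2r²)⁻¹ (r² a)'` is rational, and
`La = M (7r² - 44Mr + 72M²) / r⁶`, a quadratic with negative discriminant. For the first bound,
`r³ a' = Mr + 12M² + 6M²r/(r - 2M) - 12M² log((r - 2M)/M)`, and the logarithm is dominated by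
its tangent line `log u ≤ u/16 + log 16 - 1`, whose slope is small enough against `Mr`. -/

namespace Morawetz

open Real

lemma log_le_div_add_log_sub_one {u k : ℝ} (hu : 0 < u) (hk : 0 < k) :
    log u ≤ u / k + log k - 1 := by
  have h := log_le_sub_one_of_pos (div_pos hu hk)
  rw [log_div hu.ne' hk.ne'] at h
  linarith

variable {M r : ℝ}

noncomputable def morawetzG (M r : ℝ) : ℝ :=
  (r - 3*M) * (r + 2*M) + 6 * M ^ 2 * log ((r - 2*M) / M)

lemma morawetzA_eq_zpow_mul (M : ℝ) : morawetzA M = fun r => r ^ (-2:ℤ) * morawetzG M r := rfl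

lemma sq_mul_morawetzA (hr : r ≠ 0) : r ^ 2 * morawetzA M r = morawetzG M r := by
  simp only [morawetzA_eq_zpow_mul, zpow_neg, zpow_ofNat]
  field_simp

lemma hasDerivAt_morawetzG (hM : 0 < M) (hr : 2*M < r) :
    HasDerivAt (morawetzG M) (2*r - M + 6*M^2 / (r - 2*M)) r := by
  have hx : r - 2*M ≠ 0 := by linarith
  have hquad := ((hasDerivAt_id r).sub_const (3*M)).mul ((hasDerivAt_id r).add_const (2*M))
  have hlog := ((hasDerivAt_id r).sub_const (2*M)).div_const M |>.log
    (div_ne_zero hx hM.ne')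
  refine (hquad.add (hlog.const_mul (6 * M ^ 2))).congr_deriv ?_
  simp only [id]
  field_simp
  ring

lemma deriv_sq_mul_morawetzA (hM : 0 < M) (hr : 2*M < r) :
    deriv (fun w => w ^ 2 * morawetzA M w) r = 2*r - M + 6*M^2 / (r - 2*M) := by
  refine (hasDerivAt_morawetzG hM hr).congr_of_eventuallyEq ?_ |>.deriv
  filter_upwards [Ioi_mem_nhds (show 0 < r by linarith)] with w hw
  exact sq_mul_morawetzA (ne_of_gt hw)

lemma morawetz_inner_eq (hM : 0 < M) (hr : 2*M < r) :
    (1 - 2*M/r) * (2 * r ^ 2)⁻¹ * deriv (fun w => w ^ 2 * morawetzA M w) r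
      = (2*r^2 - 5*M*r + 8*M^2) / (2*r^3) := by
  have hx : r - 2*M ≠ 0 := by linarith
  have hr0 : r ≠ 0 := by linarith
  rw [deriv_sq_mul_morawetzA hM hr]
  field_simp
  ring

lemma hasDerivAt_morawetz_inner_rat (hr : r ≠ 0) :
    HasDerivAt (fun t => (2*t^2 - 5*M*t + 8*M^2) / (2*t^3))
      ((-r^2 + 5*M*r - 12*M^2) / r^4) r := by
  have hnum := (((hasDerivAt_pow 2 r).const_mul 2).sub
    ((hasDerivAt_id r).const_mul (5*M))).add_const (8*M^2)
  have hden := (hasDerivAt_pow 3 r).const_mul 2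
  refine (hnum.div hden (by positivity)).congr_deriv ?_
  simp only [id, Pi.sub_apply]
  field_simp
  ring

lemma deriv_morawetz_inner (hM : 0 < M) (hr : 2*M < r) :
    deriv (fun t => (1 - 2*M/t) * (2 * t ^ 2)⁻¹ *
        deriv (fun w => w ^ 2 * morawetzA M w) t) r
      = (-r^2 + 5*M*r - 12*M^2) / r^4 := by
  refine (hasDerivAt_morawetz_inner_rat (by linarith)).congr_of_eventuallyEq ?_ |>.deriv
  filter_upwards [Ioi_mem_nhds hr] with t ht
  exact morawetz_inner_eq hM ht

lemma morawetz_outer_eq (hM : 0 < M) (hr : 2*M < r) :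
    (1 - 2*M/r) * r ^ 2 * deriv (fun t => (1 - 2*M/t) * (2 * t ^ 2)⁻¹ *
        deriv (fun w => w ^ 2 * morawetzA M w) t) r
      = (-r^3 + 7*M*r^2 - 22*M^2*r + 24*M^3) / r^3 := by
  have hr0 : r ≠ 0 := by linarith
  rw [deriv_morawetz_inner hM hr]
  field_simp
  ring

lemma hasDerivAt_morawetz_outer_rat (hr : r ≠ 0) :
    HasDerivAt (fun s => (-s^3 + 7*M*s^2 - 22*M^2*s + 24*M^3) / s^3)
      ((-7*M*r^2 + 44*M^2*r - 72*M^3) / r^4) r := by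
  have hnum := ((((hasDerivAt_pow 3 r).neg).add ((hasDerivAt_pow 2 r).const_mul (7*M))).sub
    ((hasDerivAt_id r).const_mul (22*M^2))).add_const (24*M^3)
  refine (hnum.div (hasDerivAt_pow 3 r) (by positivity)).congr_deriv ?_
  simp only [id, Pi.add_apply, Pi.sub_apply, Pi.neg_apply]
  field_simp
  ring

lemma morawetzLa_eq (hM : 0 < M) (hr : 2*M < r) :
    morawetzLa M r = (7*M*r^2 - 44*M^2*r + 72*M^3) / r^6 := by
  have hr0 : r ≠ 0 := by linarith
  have hderiv := (hasDerivAt_morawetz_outer_rat (M := M) hr0).congr_of_eventuallyEq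
    (by filter_upwards [Ioi_mem_nhds hr] with s hs using morawetz_outer_eq hM hs)
  rw [morawetzLa, hderiv.deriv, zpow_neg, zpow_ofNat]
  field_simp
  ring

lemma hasDerivAt_morawetzA (hM : 0 < M) (hr : 2*M < r) :
    HasDerivAt (morawetzA M)
      ((M*r + 12*M^2 + 6*M^2*r / (r - 2*M) - 12*M^2 * log ((r - 2*M) / M)) / r^3) r := by
  have hr0 : r ≠ 0 := by linarith
  have hx : r - 2*M ≠ 0 := by linarith
  rw [morawetzA_eq_zpow_mul]
  refine ((hasDerivAt_zpow (-2) r (Or.inl hr0)).mul (hasDerivAt_morawetzG hM hr)).congr_deriv ?_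
  rw [show (-2 - 1 : ℤ) = -3 by norm_num, zpow_neg, zpow_neg, zpow_ofNat, zpow_ofNat, morawetzG]
  field_simp
  ring

lemma le_morawetzA_deriv_numerator (hM : 0 < M) (hr : 2*M < r) :
    M/10 * r ≤ M*r + 12*M^2 + 6*M^2*r / (r - 2*M) - 12*M^2 * log ((r - 2*M) / M) := by
  obtain ⟨x, hx, rfl⟩ : ∃ x, 0 < x ∧ r = x + 2*M := ⟨r - 2*M, by linarith, by ring⟩
  rw [add_sub_cancel_right]
  have hlog : log (x / M) ≤ x / M / 16 + 1.78 := by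
    have h16 : log 16 = 4 * log 2 := by
      rw [show (16 : ℝ) = 2 ^ 4 by norm_num, log_pow]; norm_num
    linarith [log_le_div_add_log_sub_one (div_pos hx hM) (by norm_num : (0:ℝ) < 16),
      log_two_lt_d9]
  have hlog_mul : 12*M^2 * log (x / M) ≤ 0.75*M*x + 21.36*M^2 := by
    have heq : 12*M^2 * (x / M / 16 + 1.78) = 0.75*M*x + 21.36*M^2 := by field_simp; ring
    linarith [mul_le_mul_of_nonneg_left hlog (by positivity : (0:ℝ) ≤ 12*M^2)]
  have hfrac : 6*M^2*(x + 2*M) / x = 6*M^2 + 12*M^3 / x := by field_simp; ring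
  have hsquare : 1.56*M^2 ≤ 0.15*M*x + 12*M^3 / x := by
    have : 0.15*M*x + 12*M^3 / x - 1.56*M^2 = M * (0.15*(x - 5.2*M)^2 + 7.944*M^2) / x := by
      field_simp; ring
    linarith [show 0 ≤ M * (0.15*(x - 5.2*M)^2 + 7.944*M^2) / x by positivity]
  rw [hfrac]
  linarith

lemma morawetzA_three_mul (hM : M ≠ 0) : morawetzA M (3*M) = 0 := by
  rw [morawetzA, show 3*M - 2*M = M by ring, div_self hM, log_one]
  ring

lemma le_deriv_morawetzA (hM : 0 < M) (hr : 2*M < r) :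
    M/10 * r ^ (-2:ℤ) ≤ deriv (morawetzA M) r := by
  have hr0 : 0 < r := by linarith
  rw [(hasDerivAt_morawetzA hM hr).deriv, zpow_neg, zpow_ofNat,
    show M/10 * (r^2)⁻¹ = M/10 * r / r^3 by field_simp]
  gcongr
  exact le_morawetzA_deriv_numerator hM hr

lemma le_morawetzLa (hM : 0 < M) (hr : 2*M < r) :
    M/10 * r ^ (-4:ℤ) ≤ morawetzLa M r := by
  have hr0 : 0 < r := by linarith
  rw [morawetzLa_eq hM hr, zpow_neg, zpow_ofNat,
    show M/10 * (r^4)⁻¹ = M/10 * r^2 / r^6 by field_simp]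
  gcongr
  -- 690 (6.9 r² - 44 M r + 72 M²) = (69 r - 220 M)² + 1280 M²
  nlinarith [mul_nonneg hM.le (sq_nonneg (69*r - 220*M)), pow_pos hM 3]

end Morawetz

/-- **Properties of the explicit Morawetz multiplier coefficient.** For `M > 0` the
function `a = morawetzA M` satisfies `a(3M) = 0`, and there is a constant `c > 0`
(depending only on `M`) such that `a'(r) ≥ c r⁻²` and `(La)(r) ≥ c r⁻⁴` for all
`r > 2M`. -/
theorem morawetz_multiplier_properties (M : ℝ) (hM : 0 < M) :
    morawetzA M (3 * M) = 0 ∧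
      ∃ c : ℝ, 0 < c ∧ ∀ r : ℝ, 2 * M < r →
        c * r ^ (-2:ℤ) ≤ deriv (morawetzA M) r ∧
        c * r ^ (-4:ℤ) ≤ morawetzLa M r :=
  ⟨Morawetz.morawetzA_three_mul hM.ne', M/10, by positivity,
    fun _ hr => ⟨Morawetz.le_deriv_morawetzA hM hr, Morawetz.le_morawetzLa hM hr⟩⟩
end

section
/- (Exponential smallness of the region where the multiplier is truncated.) Let M > 0 and define R : (2M,∞) → ℝ by R(r) = (r−3M)(r+2M) + 6M² log((r−2M)/M). Then there exist constants c > 0 and C > 0, depending only on M, such that for every ε ∈ (0,1], the Lebesgue measure of the set { r ∈ (2M,∞) : ε·R(r) ≤ −1 } is at most C e^{−c/ε}. -/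
open MeasureTheory Set

/-- **Exponential smallness of the region where the Morawetz multiplier is truncated.**
For `M > 0` let `R(r) = (r-3M)(r+2M) + 6M² log((r-2M)/M)` on `(2M,∞)`. Then there are
constants `c, C > 0`, depending only on `M`, such that for every `ε ∈ (0,1]` the Lebesgue
measure of `{ r ∈ (2M,∞) : ε R(r) ≤ -1 }` is at most `C e^{-c/ε}`. -/
theorem truncation_region_exponentially_small (M : ℝ) (hM : 0 < M) :
    ∃ c : ℝ, 0 < c ∧ ∃ C : ℝ, 0 < C ∧
      ∀ ε : ℝ, 0 < ε → ε ≤ 1 →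
        volume {r : ℝ | 2 * M < r ∧
            ε * ((r - 3*M) * (r + 2*M) + 6 * M ^ 2 * Real.log ((r - 2*M) / M)) ≤ -1}
          ≤ ENNReal.ofReal (C * Real.exp (-c / ε)) := by
  refine ⟨1 / (6 * M ^ 2), by positivity, M * Real.exp (5/6), by positivity, ?_⟩
  intro ε hε hε1
  set c : ℝ := 1 / (6 * M ^ 2) with hc
  set C : ℝ := M * Real.exp (5/6) with hC
  have hsub : {r : ℝ | 2 * M < r ∧
      ε * ((r - 3*M) * (r + 2*M) + 6 * M ^ 2 * Real.log ((r - 2*M) / M)) ≤ -1}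
      ⊆ Ioc (2*M) (2*M + C * Real.exp (-c / ε)) := by
    rintro r ⟨h1, h2⟩
    refine ⟨h1, ?_⟩
    have hx : 0 < (r - 2*M) / M := by
      apply div_pos <;> linarith
    -- r < 3M, else contradiction
    have hr3 : r < 3 * M := by
      by_contra h
      push_neg at h
      have hlog : 0 ≤ Real.log ((r - 2*M) / M) := by
        apply Real.log_nonneg
        rw [le_div_iff₀ hM]; linarith
      have hRn : 0 ≤ (r - 3*M) * (r + 2*M) + 6 * M ^ 2 * Real.log ((r - 2*M) / M) := by
        have := mul_nonneg (by linarith : (0:ℝ) ≤ r - 3*M) (by linarith : (0:ℝ) ≤ r + 2*M)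
        nlinarith
      nlinarith [mul_nonneg hε.le hRn]
    have hprod : -(5 * M ^ 2) ≤ (r - 3*M) * (r + 2*M) := by nlinarith
    have h1ε : ε * (1/ε) = 1 := by field_simp
    have hR : (r - 3*M) * (r + 2*M) + 6 * M ^ 2 * Real.log ((r - 2*M) / M) ≤ -(1/ε) := by
      nlinarith [h2, h1ε]
    have hlog : Real.log ((r - 2*M) / M) ≤ 5/6 + (-c / ε) := by
      have h6 : (0:ℝ) < 6 * M ^ 2 := by positivity
      have h5 : 6 * M ^ 2 * Real.log ((r - 2*M) / M) ≤ 5 * M ^ 2 - 1/ε := by linarith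
      have key : Real.log ((r - 2*M) / M) ≤ (5 * M ^ 2 - 1/ε) / (6 * M ^ 2) := by
        rw [le_div_iff₀ h6]; nlinarith [h5]
      have heq : (5 * M ^ 2 - 1/ε) / (6 * M ^ 2) = 5/6 + -c / ε := by
        rw [hc]; field_simp; ring
      linarith [heq ▸ key]
    have hxle : (r - 2*M) / M ≤ Real.exp (5/6 + (-c / ε)) := by
      calc (r - 2*M) / M = Real.exp (Real.log ((r - 2*M) / M)) := (Real.exp_log hx).symm
        _ ≤ Real.exp (5/6 + (-c / ε)) := Real.exp_le_exp.mpr hlog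
    have : r - 2*M ≤ M * Real.exp (5/6 + (-c/ε)) := by
      rw [div_le_iff₀ hM] at hxle; linarith [hxle]
    rw [Real.exp_add] at this
    have : r - 2*M ≤ C * Real.exp (-c/ε) := by rw [hC]; linarith [this]
    linarith
  calc volume _ ≤ volume (Ioc (2*M) (2*M + C * Real.exp (-c / ε))) := measure_mono hsub
    _ = ENNReal.ofReal (C * Real.exp (-c / ε)) := by rw [Real.volume_Ioc]; ring_nf
end
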